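/- Let z be real with 0 ≤ z < 1, let k̃ = ((k_1,μ_1),…,(k_r,μ_r)) be an augmented index and let l̃ = ((l_1,ν_1),…,(l_s,ν_s)) be a non-empty augmented index (s ≥ 1). Then the connected sum satisfies the transport relation L̃i(w(k̃)y_1; w(l̃); z) = L̃i(w(k̃); w(l̃)x; z), i.e. appending the augmented entry (1,1) to the first index gives the same value as increasing the last exponent l_s of the second index by 1. -/

import Mathlib

/-!
Split off the last gap `d = m_{r+1} - m_r` of the first chain. With `m = m_r` and `n = n_s`, the
new factor `(1 - z^(d+1)) / (m + d + 1)` summed against the connector gives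
`∑_{d ≥ 0} (1 - z^(d+1)) / (m + d + 1) · C(m + d + 1, n; z) = C(m, n; z) / n`,
and `1 / n` is exactly the extra factor produced by raising `l_s` by one.

This identity is checked coefficientwise in `z`. Expanding `1 - z^(d+1)` splits the left side into
two double series with nonnegative terms: the first one sums over `d` by telescoping
(`tailCoeff`), the second one is collected along antidiagonals (`shiftedTailCoeff`), and the two
coefficients differ by the coefficient of `C(m, n; z) / n`. In `ℝ≥0∞` every rearrangement is free;
the only finiteness needed, of the subtracted series, holds because the coefficients of the
connector are at most `1`.
-/

open scoped ENNReal

/-- The rising factorial (Pochhammer symbol) (a)_n = a(a+1)⋯(a+n−1). -/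
noncomputable def risingFactorial (a : ℝ) (n : ℕ) : ℝ := ∏ i ∈ Finset.range n, (a + i)

/-- The Gauss hypergeometric series F(α,β;γ;z) = ∑_{n≥0} (α)_n (β)_n / ((γ)_n n!) · zⁿ. -/
noncomputable def F (α β γ z : ℝ) : ℝ :=
  ∑' n : ℕ, risingFactorial α n * risingFactorial β n /
    (risingFactorial γ n * (n.factorial : ℝ)) * z ^ n

/-- The connector C(m,n;z) = m! n!/(m+n)! · F(m, n; m+n+1; z). -/
noncomputable def C (m n : ℕ) (z : ℝ) : ℝ :=
  (m.factorial : ℝ) * n.factorial / (m + n).factorial * F m n (m + n + 1) z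

/-- An augmented index: a tuple of pairs (k_i, μ_i) with μ_i ∈ {0,1};
`true` encodes μ = 1 and `false` encodes μ = 0. -/
abbrev AugIndex := List (ℕ × Bool)

/-- All exponents k_i of the augmented index are positive integers. -/
def AugIndex.Valid (K : AugIndex) : Prop := ∀ p ∈ K, 1 ≤ p.1

/-- An augmented index is admissible if it is empty or its last entry is not (1,1). -/
def AugIndex.Admissible (K : AugIndex) : Prop := K.getLast? ≠ some (1, true)

/-- The strictly increasing chain 0 = m_0 < m_1 < ⋯ < m_r encoded by gaps `d`:
m_i = (d_0 + 1) + ⋯ + (d_{i-1} + 1). -/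
def chain {r : ℕ} (d : Fin r → ℕ) (i : ℕ) : ℕ :=
  ∑ j ∈ Finset.univ.filter (fun j : Fin r => (j : ℕ) < i), (d j + 1)

/-- The factor (μ_i + (−1)^{μ_i} z^{m_i − m_{i−1}}) / m_i^{k_i}. -/
noncomputable def termFactor (z : ℝ) (k : ℕ) (μ : Bool) (mprev mcur : ℕ) : ℝ :=
  ((if μ then 1 else 0) + (if μ then -1 else 1) * z ^ (mcur - mprev)) / (mcur : ℝ) ^ k

/-- The connected sum L̃i(k̃; l̃; z), a well-defined sum of nonnegative terms in [0,∞]. -/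
noncomputable def connSum (K L : AugIndex) (z : ℝ) : ℝ≥0∞ :=
  ∑' p : (Fin K.length → ℕ) × (Fin L.length → ℕ),
    ENNReal.ofReal
      ((∏ i : Fin K.length,
          termFactor z (K.get i).1 (K.get i).2 (chain p.1 i.val) (chain p.1 (i.val + 1))) *
       (∏ j : Fin L.length,
          termFactor z (L.get j).1 (L.get j).2 (chain p.2 j.val) (chain p.2 (j.val + 1))) *
       C (chain p.1 K.length) (chain p.2 L.length) z)

/-- Appending the letter x to the word w(k̃): increase the last exponent k_r by 1. -/
def incLast : AugIndex → AugIndex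
  | [] => []
  | [p] => [(p.1 + 1, p.2)]
  | p :: q :: ps => p :: incLast (q :: ps)

open scoped Nat

section Transport

variable {z : ℝ}

lemma risingFactorial_succ (a : ℝ) (k : ℕ) :
    risingFactorial a (k + 1) = risingFactorial a k * (a + k) :=
  Finset.prod_range_succ _ _

lemma risingFactorial_nonneg {a : ℝ} (ha : 0 ≤ a) (k : ℕ) : 0 ≤ risingFactorial a k :=
  Finset.prod_nonneg fun _ _ => by positivity

lemma risingFactorial_natCast_add_one (μ k : ℕ) :
    risingFactorial ((μ : ℝ) + 1) k = (μ + k)! / μ ! := by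
  rw [eq_div_iff (by positivity)]
  induction k with
  | zero => simp [risingFactorial]
  | succ k ih =>
    rw [risingFactorial_succ, mul_right_comm, ih, ← Nat.add_assoc, Nat.factorial_succ]
    push_cast; ring

noncomputable def connCoeff (m n k : ℕ) : ℝ :=
  (m ! : ℝ) * n ! / (m + n)! *
    (risingFactorial m k * risingFactorial n k / (risingFactorial (m + n + 1) k * k !))

lemma C_eq_tsum_connCoeff (m n : ℕ) (z : ℝ) : C m n z = ∑' k, connCoeff m n k * z ^ k := by
  rw [C, F, ← tsum_mul_left]
  simp only [connCoeff, mul_assoc]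

lemma connCoeff_nonneg (m n k : ℕ) : 0 ≤ connCoeff m n k := by
  have := risingFactorial_nonneg (Nat.cast_nonneg (α := ℝ) m) k
  have := risingFactorial_nonneg (Nat.cast_nonneg (α := ℝ) n) k
  have := risingFactorial_nonneg (by positivity : (0 : ℝ) ≤ m + n + 1) k
  unfold connCoeff; positivity

lemma connCoeff_zero_left (n k : ℕ) : connCoeff 0 n k = if k = 0 then 1 else 0 := by
  rcases k with _ | k
  · simp [connCoeff, risingFactorial, Nat.factorial_ne_zero]
  · simp [connCoeff, risingFactorial, Finset.prod_range_succ']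

lemma connCoeff_succ_succ (μ ν k : ℕ) :
    connCoeff (μ + 1) (ν + 1) k =
      (μ + 1) * (ν + 1) * (μ + k)! * (ν + k)! / ((μ + ν + k + 2)! * k !) := by
  have hsum : ((μ + 1 : ℕ) : ℝ) + (ν + 1 : ℕ) + 1 = (μ + ν + 2 : ℕ) + 1 := by push_cast; ring
  rw [connCoeff, hsum, risingFactorial_natCast_add_one, show μ + 1 + (ν + 1) = μ + ν + 2 by ring,
    show μ + ν + 2 + k = μ + ν + k + 2 by ring]
  simp only [Nat.cast_succ, risingFactorial_natCast_add_one, Nat.factorial_succ]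
  push_cast
  field_simp

lemma factorial_add_mul_factorial_add_le (μ ν k : ℕ) :
    (μ + k)! * (ν + k)! ≤ (μ + ν + k)! * k ! := by
  induction μ with
  | zero => simp [mul_comm]
  | succ μ ih =>
    rw [show μ + 1 + k = (μ + k) + 1 by ring, show μ + 1 + ν + k = (μ + ν + k) + 1 by ring,
      Nat.factorial_succ, Nat.factorial_succ, mul_assoc, mul_assoc]
    exact Nat.mul_le_mul (by omega) ih

lemma connCoeff_le_one (m ν k : ℕ) : connCoeff m (ν + 1) k ≤ 1 := by
  rcases m with _ | μ
  · rw [connCoeff_zero_left]; split_ifs <;> norm_num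
  rw [connCoeff_succ_succ, div_le_one (by positivity)]
  have key : (μ + 1) * (ν + 1) * (μ + k)! * (ν + k)! ≤ (μ + ν + k + 2)! * k ! :=
    calc (μ + 1) * (ν + 1) * (μ + k)! * (ν + k)!
        = (μ + 1) * (ν + 1) * ((μ + k)! * (ν + k)!) := by ring
      _ ≤ (μ + ν + k + 2) * (μ + ν + k + 1) * ((μ + ν + k)! * k !) :=
        Nat.mul_le_mul (by nlinarith) (factorial_add_mul_factorial_add_le μ ν k)
      _ = (μ + ν + k + 2)! * k ! := by simp only [Nat.factorial_succ]; ring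
  exact_mod_cast key

lemma summable_connCoeff_mul_pow (hz0 : 0 ≤ z) (hz1 : z < 1) (m ν : ℕ) :
    Summable fun k => connCoeff m (ν + 1) k * z ^ k :=
  (summable_geometric_of_lt_one hz0 hz1).of_nonneg_of_le
    (fun k => mul_nonneg (connCoeff_nonneg _ _ _) (pow_nonneg hz0 k))
    (fun k => mul_le_of_le_one_left (pow_nonneg hz0 k) (connCoeff_le_one m ν k))

lemma ofReal_mul_C_eq_tsum (hz0 : 0 ≤ z) (hz1 : z < 1) {a : ℝ} (ha : 0 ≤ a) (m ν : ℕ) :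
    ENNReal.ofReal (a * C m (ν + 1) z) =
      ∑' k, ENNReal.ofReal (a * connCoeff m (ν + 1) k * z ^ k) := by
  rw [C_eq_tsum_connCoeff, ← tsum_mul_left, ENNReal.ofReal_tsum_of_nonneg
    (fun k => mul_nonneg ha (mul_nonneg (connCoeff_nonneg _ _ _) (pow_nonneg hz0 k)))
    ((summable_connCoeff_mul_pow hz0 hz1 m ν).mul_left a)]
  simp only [mul_assoc]

lemma hasSum_sub_succ_of_tendsto {u : ℕ → ℝ} (hu : Antitone u)
    (hlim : Filter.Tendsto u Filter.atTop (nhds 0)) :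
    HasSum (fun n => u n - u (n + 1)) (u 0) := by
  rw [hasSum_iff_tendsto_nat_of_nonneg fun n => sub_nonneg.2 (hu n.le_succ)]
  simp only [Finset.sum_range_sub']
  simpa using hlim.const_sub (u 0)

noncomputable def tailCoeff (m ν k : ℕ) : ℝ :=
  (m + k)! * (ν + k)! / ((m + ν + k + 1)! * k !)

lemma tailCoeff_nonneg (m ν k : ℕ) : 0 ≤ tailCoeff m ν k := by
  unfold tailCoeff; positivity

lemma tailCoeff_le (m ν k : ℕ) : tailCoeff m ν k ≤ (ν + k)! / k ! / (m + 1 : ℕ) := by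
  have key : (m + k)! * (m + 1) ≤ (m + ν + k + 1)! :=
    calc (m + k)! * (m + 1) ≤ (m + k)! * (m + k + 1) := Nat.mul_le_mul_left _ (by omega)
      _ = (m + k + 1)! := by rw [Nat.factorial_succ]; ring
      _ ≤ (m + ν + k + 1)! := Nat.factorial_le (by omega)
  rw [tailCoeff, div_div, div_le_div_iff₀ (by positivity) (by positivity)]
  calc ((m + k)! : ℝ) * (ν + k)! * (k ! * (m + 1 : ℕ))
        = (ν + k)! * k ! * ((m + k)! * (m + 1) : ℕ) := by push_cast; ring
    _ ≤ (ν + k)! * k ! * ((m + ν + k + 1)! : ℕ) := by gcongr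
    _ = (ν + k)! * ((m + ν + k + 1)! * k !) := by ring

lemma connCoeff_div_eq_tailCoeff_sub (m ν k : ℕ) :
    connCoeff (m + 1) (ν + 1) k / (m + 1 : ℕ) = tailCoeff m ν k - tailCoeff (m + 1) ν k := by
  rw [connCoeff_succ_succ, tailCoeff, tailCoeff, show m + 1 + k = (m + k) + 1 by ring,
    show m + 1 + ν + k + 1 = (m + ν + k + 1) + 1 by ring,
    show m + ν + k + 2 = (m + ν + k + 1) + 1 by ring, Nat.factorial_succ (m + k),
    Nat.factorial_succ (m + ν + k + 1)]
  push_cast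
  field_simp
  ring

lemma hasSum_tailCoeff (m ν k : ℕ) :
    HasSum (fun d => connCoeff (m + d + 1) (ν + 1) k / (m + d + 1 : ℕ)) (tailCoeff m ν k) := by
  have hanti : Antitone fun d => tailCoeff (m + d) ν k := antitone_nat_of_succ_le fun d => by
    have := connCoeff_div_eq_tailCoeff_sub (m + d) ν k
    have := div_nonneg (connCoeff_nonneg (m + d + 1) (ν + 1) k) (Nat.cast_nonneg (m + d + 1))
    rw [← add_assoc]
    linarith
  have hlim : Filter.Tendsto (fun d => tailCoeff (m + d) ν k) Filter.atTop (nhds 0) := by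
    refine squeeze_zero (fun d => tailCoeff_nonneg _ ν k) (fun d => tailCoeff_le (m + d) ν k) ?_
    have := (tendsto_const_div_atTop_nhds_zero_nat ((ν + k)! / k ! : ℝ)).comp
      (Filter.tendsto_add_atTop_nat (m + 1))
    refine this.congr fun d => ?_
    simp only [Function.comp_apply]
    congr 1
    push_cast
    ring
  simpa only [connCoeff_div_eq_tailCoeff_sub, add_zero, ← add_assoc] using
    hasSum_sub_succ_of_tendsto hanti hlim

open Finset in
noncomputable def shiftedTailCoeff (m ν K : ℕ) : ℝ :=
  ∑ p ∈ antidiagonal K, connCoeff (m + p.1 + 1) (ν + 1) p.2 / (m + p.1 + 1 : ℕ)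

lemma tailCoeff_zero (m ν : ℕ) : tailCoeff m ν 0 = connCoeff m (ν + 1) 0 / (ν + 1) := by
  simp only [tailCoeff, connCoeff, risingFactorial, Finset.range_zero, Finset.prod_empty,
    Nat.factorial_zero, add_zero, Nat.cast_one, mul_one, div_one,
    show m + (ν + 1) = m + ν + 1 by ring, Nat.factorial_succ ν]
  push_cast
  field_simp

lemma tailCoeff_succ_add (m ν j : ℕ) :
    tailCoeff m ν (j + 1) + connCoeff (m + 1) (ν + 1) j / (ν + 1) =
      tailCoeff m ν j + connCoeff m (ν + 1) (j + 1) / (ν + 1) := by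
  rcases m with _ | μ
  · simp only [tailCoeff, connCoeff_succ_succ, connCoeff_zero_left, if_neg j.succ_ne_zero]
    rw [show 0 + (j + 1) = j + 1 by ring, show 0 + ν + (j + 1) + 1 = ν + j + 1 + 1 by ring,
      show 0 + ν + j + 2 = ν + j + 1 + 1 by ring, show 0 + ν + j + 1 = ν + j + 1 by ring,
      show ν + (j + 1) = ν + j + 1 by ring, show 0 + j = j by ring,
      Nat.factorial_succ (ν + j + 1), Nat.factorial_succ (ν + j), Nat.factorial_succ j]
    push_cast
    field_simp
    ring
  · simp only [tailCoeff, connCoeff_succ_succ]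
    rw [show μ + 1 + (j + 1) = μ + j + 1 + 1 by ring,
      show μ + 1 + ν + (j + 1) + 1 = μ + ν + j + 2 + 1 by ring,
      show μ + 1 + ν + j + 2 = μ + ν + j + 2 + 1 by ring,
      show μ + 1 + ν + j + 1 = μ + ν + j + 2 by ring,
      show μ + ν + (j + 1) + 2 = μ + ν + j + 2 + 1 by ring,
      show ν + (j + 1) = ν + j + 1 by ring, show μ + 1 + j = μ + j + 1 by ring,
      show μ + (j + 1) = μ + j + 1 by ring, Nat.factorial_succ (μ + j + 1),
      Nat.factorial_succ (μ + ν + j + 2), Nat.factorial_succ (ν + j), Nat.factorial_succ j]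
    push_cast
    field_simp
    ring

lemma tailCoeff_succ (m ν K : ℕ) :
    tailCoeff m ν (K + 1) = shiftedTailCoeff m ν K + connCoeff m (ν + 1) (K + 1) / (ν + 1) := by
  induction K generalizing m with
  | zero =>
    have := connCoeff_div_eq_tailCoeff_sub m ν 0
    have := tailCoeff_succ_add m ν 0
    rw [tailCoeff_zero (m + 1)] at *
    simp only [shiftedTailCoeff, Finset.Nat.antidiagonal_zero, Finset.sum_singleton, add_zero]
    linarith
  | succ K ih =>
    have := connCoeff_div_eq_tailCoeff_sub m ν (K + 1)
    have := tailCoeff_succ_add m ν (K + 1)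
    have := ih (m + 1)
    have hshift : shiftedTailCoeff m ν (K + 1) =
        connCoeff (m + 1) (ν + 1) (K + 1) / (m + 1 : ℕ) + shiftedTailCoeff (m + 1) ν K := by
      rw [shiftedTailCoeff, Finset.Nat.sum_antidiagonal_succ, shiftedTailCoeff]
      simp only [add_zero, Nat.add_right_comm m _ 1, ← Nat.add_assoc]
    linarith

open Finset in
lemma tsum_tsum_ofReal_shifted_eq (hz0 : 0 ≤ z) (m ν : ℕ) :
    ∑' (d : ℕ) (k : ℕ),
        ENNReal.ofReal (connCoeff (m + d + 1) (ν + 1) k / (m + d + 1 : ℕ) * z ^ (k + d + 1)) =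
      ∑' K, ENNReal.ofReal (shiftedTailCoeff m ν K * z ^ (K + 1)) := by
  set f : ℕ × ℕ → ℝ := fun p =>
    connCoeff (m + p.1 + 1) (ν + 1) p.2 / (m + p.1 + 1 : ℕ) * z ^ (p.2 + p.1 + 1)
  have hf : ∀ p, 0 ≤ f p := fun p =>
    mul_nonneg (div_nonneg (connCoeff_nonneg _ _ _) (Nat.cast_nonneg _)) (pow_nonneg hz0 _)
  rw [← ENNReal.tsum_prod (f := fun d k => ENNReal.ofReal (f (d, k))),
    ← (HasAntidiagonal.sigmaAntidiagonalEquivProd (A := ℕ)).tsum_eq, ENNReal.tsum_sigma']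
  refine tsum_congr fun K => ?_
  simp only [HasAntidiagonal.sigmaAntidiagonalEquivProd_apply]
  rw [Finset.tsum_subtype (antidiagonal K) fun p => ENNReal.ofReal (f p),
    ← ENNReal.ofReal_sum_of_nonneg fun p _ => hf p, shiftedTailCoeff, Finset.sum_mul]
  refine congrArg ENNReal.ofReal (Finset.sum_congr rfl fun p hp => ?_)
  rw [HasAntidiagonal.mem_antidiagonal] at hp
  simp only [f, add_comm p.2 p.1, hp]

lemma ofReal_C_div_eq (hz0 : 0 ≤ z) (hz1 : z < 1) (m ν : ℕ) :
    ENNReal.ofReal (C m (ν + 1) z / (ν + 1)) =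
      ENNReal.ofReal (connCoeff m (ν + 1) 0 / (ν + 1)) +
        ∑' K, ENNReal.ofReal (connCoeff m (ν + 1) (K + 1) / (ν + 1) * z ^ (K + 1)) := by
  have hsum := (summable_connCoeff_mul_pow hz0 hz1 m ν).div_const (ν + 1 : ℝ)
  rw [C_eq_tsum_connCoeff, ← tsum_div_const, ENNReal.ofReal_tsum_of_nonneg (fun K => by
      have := connCoeff_nonneg m (ν + 1) K; positivity) hsum,
    tsum_eq_zero_add' ENNReal.summable]
  simp only [pow_zero, mul_one, div_mul_eq_mul_div]

lemma tsum_ofReal_tailCoeff_eq (hz0 : 0 ≤ z) (hz1 : z < 1) (m ν : ℕ) :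
    ∑' K, ENNReal.ofReal (tailCoeff m ν K * z ^ K) =
      ∑' K, ENNReal.ofReal (shiftedTailCoeff m ν K * z ^ (K + 1)) +
        ENNReal.ofReal (C m (ν + 1) z / (ν + 1)) := by
  have hshift : ∀ K, 0 ≤ shiftedTailCoeff m ν K * z ^ (K + 1) := fun K => mul_nonneg
    (Finset.sum_nonneg fun p _ => div_nonneg (connCoeff_nonneg _ _ _) (Nat.cast_nonneg _))
    (pow_nonneg hz0 _)
  have hc : ∀ K, 0 ≤ connCoeff m (ν + 1) (K + 1) / (ν + 1) * z ^ (K + 1) := fun K => by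
    have := connCoeff_nonneg m (ν + 1) (K + 1); positivity
  rw [ofReal_C_div_eq hz0 hz1, tsum_eq_zero_add' ENNReal.summable]
  simp only [tailCoeff_succ, tailCoeff_zero, add_mul, pow_zero, mul_one,
    ENNReal.ofReal_add (hshift _) (hc _), ENNReal.tsum_add]
  ring

lemma tsum_tsum_ofReal_shifted_ne_top (hz0 : 0 ≤ z) (hz1 : z < 1) (m ν : ℕ) :
    ∑' (d : ℕ) (k : ℕ),
        ENNReal.ofReal (connCoeff (m + d + 1) (ν + 1) k / (m + d + 1 : ℕ) * z ^ (k + d + 1)) ≠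
      ⊤ := by
  have hr : 1 - ENNReal.ofReal z ≠ 0 := (tsub_pos_of_lt (ENNReal.ofReal_lt_one.2 hz1)).ne'
  refine ne_top_of_le_ne_top (b := ∑' (d : ℕ) (k : ℕ), ENNReal.ofReal z ^ k * ENNReal.ofReal z ^ d)
    ?_ (ENNReal.tsum_le_tsum fun d => ENNReal.tsum_le_tsum fun k => ?_)
  · simp only [ENNReal.tsum_mul_right, ENNReal.tsum_mul_left, ENNReal.tsum_geometric]
    exact ENNReal.mul_ne_top (ENNReal.inv_ne_top.2 hr) (ENNReal.inv_ne_top.2 hr)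
  · rw [← ENNReal.ofReal_pow hz0, ← ENNReal.ofReal_pow hz0, ← ENNReal.ofReal_mul (pow_nonneg hz0 _),
      ← pow_add]
    refine ENNReal.ofReal_le_ofReal ?_
    have hcoeff : connCoeff (m + d + 1) (ν + 1) k / (m + d + 1 : ℕ) ≤ 1 :=
      div_le_one_of_le₀ ((connCoeff_le_one _ ν k).trans (Nat.one_le_cast.2 (Nat.succ_pos _)))
        (Nat.cast_nonneg _)
    calc connCoeff (m + d + 1) (ν + 1) k / (m + d + 1 : ℕ) * z ^ (k + d + 1)
        ≤ 1 * z ^ (k + d) := mul_le_mul hcoeff (pow_le_pow_of_le_one hz0 hz1.le (by omega))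
          (pow_nonneg hz0 _) zero_le_one
      _ = z ^ (k + d) := one_mul _

theorem tsum_ofReal_transport (hz0 : 0 ≤ z) (hz1 : z < 1) (m ν : ℕ) :
    ∑' d : ℕ, ENNReal.ofReal ((1 - z ^ (d + 1)) / (m + d + 1 : ℕ) * C (m + d + 1) (ν + 1) z) =
      ENNReal.ofReal (C m (ν + 1) z / (ν + 1)) := by
  have hterm : ∀ d k, 0 ≤ connCoeff (m + d + 1) (ν + 1) k / (m + d + 1 : ℕ) := fun d k =>
    div_nonneg (connCoeff_nonneg _ _ _) (Nat.cast_nonneg _)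
  have hsplit : ∀ d : ℕ,
      ENNReal.ofReal ((1 - z ^ (d + 1)) / (m + d + 1 : ℕ) * C (m + d + 1) (ν + 1) z) +
        ∑' k, ENNReal.ofReal (connCoeff (m + d + 1) (ν + 1) k / (m + d + 1 : ℕ) * z ^ (k + d + 1)) =
      ∑' k, ENNReal.ofReal (connCoeff (m + d + 1) (ν + 1) k / (m + d + 1 : ℕ) * z ^ k) := by
    intro d
    have hz : 0 ≤ 1 - z ^ (d + 1) := sub_nonneg.2 (pow_le_one₀ hz0 hz1.le)
    rw [ofReal_mul_C_eq_tsum hz0 hz1 (by positivity), ← ENNReal.tsum_add]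
    refine tsum_congr fun k => ?_
    have hck := connCoeff_nonneg (m + d + 1) (ν + 1) k
    rw [← ENNReal.ofReal_add (by positivity) (mul_nonneg (hterm d k) (pow_nonneg hz0 _))]
    congr 1
    ring
  have htail : ∑' (d : ℕ) (k : ℕ),
      ENNReal.ofReal (connCoeff (m + d + 1) (ν + 1) k / (m + d + 1 : ℕ) * z ^ k) =
        ∑' K, ENNReal.ofReal (tailCoeff m ν K * z ^ K) := by
    rw [ENNReal.tsum_comm]
    refine tsum_congr fun K => ?_
    have hK := (hasSum_tailCoeff m ν K).mul_right (z ^ K)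
    rw [← ENNReal.ofReal_tsum_of_nonneg (fun d => mul_nonneg (hterm d K) (pow_nonneg hz0 K))
      hK.summable, hK.tsum_eq]
  rw [← ENNReal.add_left_inj (tsum_tsum_ofReal_shifted_ne_top hz0 hz1 m ν), ← ENNReal.tsum_add,
    tsum_congr hsplit, htail, tsum_ofReal_tailCoeff_eq hz0 hz1, tsum_tsum_ofReal_shifted_eq hz0,
    add_comm]

lemma chain_snoc {r : ℕ} (q : Fin r → ℕ) (d i : ℕ) :
    chain (Fin.snoc q d : Fin (r + 1) → ℕ) i = chain q i + if r < i then d + 1 else 0 := by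
  simp only [chain, Finset.sum_filter, Fin.sum_univ_castSucc, Fin.snoc_castSucc, Fin.val_castSucc,
    Fin.snoc_last, Fin.val_last]

lemma chain_of_length_le {r : ℕ} (q : Fin r → ℕ) {i : ℕ} (h : r ≤ i) : chain q i = chain q r := by
  simp only [chain]
  congr 1
  ext j
  simp only [Finset.mem_filter, Finset.mem_univ, true_and]
  omega

noncomputable def chainWeight {r : ℕ} (a : Fin r → ℕ × Bool) (q : Fin r → ℕ) (z : ℝ) : ℝ :=
  ∏ i : Fin r, termFactor z (a i).1 (a i).2 (chain q i) (chain q (i + 1))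

lemma chainWeight_nonneg (hz0 : 0 ≤ z) (hz1 : z < 1) {r : ℕ} (a : Fin r → ℕ × Bool)
    (q : Fin r → ℕ) : 0 ≤ chainWeight a q z := by
  refine Finset.prod_nonneg fun i _ => div_nonneg ?_ (by positivity)
  cases (a i).2
  · simpa using pow_nonneg hz0 _
  · simpa using pow_le_one₀ hz0 hz1.le

lemma chainWeight_snoc {r : ℕ} (a : Fin r → ℕ × Bool) (x : ℕ × Bool) (q : Fin r → ℕ) (d : ℕ) :
    chainWeight (Fin.snoc a x) (Fin.snoc q d) z =
      chainWeight a q z * termFactor z x.1 x.2 (chain q r) (chain q r + (d + 1)) := by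
  rw [chainWeight, Fin.prod_univ_castSucc]
  congr 1
  · refine Finset.prod_congr rfl fun i _ => ?_
    simp only [Fin.snoc_castSucc, Fin.val_castSucc, chain_snoc,
      if_neg (Nat.not_lt.2 i.isLt.le), if_neg (Nat.not_lt.2 i.isLt), add_zero]
  · simp [chain_snoc, chain_of_length_le q r.le_succ]

lemma termFactor_succ (k : ℕ) (μ : Bool) (a c : ℕ) :
    termFactor z (k + 1) μ a c = termFactor z k μ a c / c := by
  rw [termFactor, termFactor, pow_succ, div_div]

lemma chainWeight_snoc_succ {s : ℕ} (b : Fin s → ℕ × Bool) (k : ℕ) (μ : Bool)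
    (q : Fin (s + 1) → ℕ) :
    chainWeight (Fin.snoc b (k + 1, μ)) q z =
      chainWeight (Fin.snoc b (k, μ)) q z / chain q (s + 1) := by
  rw [← Fin.snoc_init_self q, chainWeight_snoc, chainWeight_snoc, termFactor_succ, mul_div_assoc,
    chain_snoc, if_pos s.lt_succ_self, chain_of_length_le _ s.le_succ]

noncomputable def connSumFin {r s : ℕ} (a : Fin r → ℕ × Bool) (b : Fin s → ℕ × Bool) (z : ℝ) :
    ℝ≥0∞ :=
  ∑' p : (Fin r → ℕ) × (Fin s → ℕ),
    ENNReal.ofReal (chainWeight a p.1 z * chainWeight b p.2 z * C (chain p.1 r) (chain p.2 s) z)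

lemma connSum_ofFn {r s : ℕ} (a : Fin r → ℕ × Bool) (b : Fin s → ℕ × Bool) :
    connSum (List.ofFn a) (List.ofFn b) z = connSumFin a b z := by
  suffices ∀ (K L : AugIndex) (hK : K.length = r) (hL : L.length = s),
      K.get = a ∘ Fin.cast hK → L.get = b ∘ Fin.cast hL → connSum K L z = connSumFin a b z from
    this _ _ (List.length_ofFn) (List.length_ofFn) (funext (List.get_ofFn a))
      (funext (List.get_ofFn b))
  rintro K L rfl rfl hK hL
  rw [show a = K.get from hK.symm, show b = L.get from hL.symm]
  rfl

lemma termFactor_one_true (m d : ℕ) :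
    termFactor z 1 true m (m + (d + 1)) = (1 - z ^ (d + 1)) / (m + d + 1 : ℕ) := by
  simp only [termFactor, if_true, Nat.add_sub_cancel_left, pow_one]
  rw [← add_assoc]
  ring

lemma connSumFin_snoc_one_true (hz0 : 0 ≤ z) (hz1 : z < 1) {r s : ℕ} (a : Fin r → ℕ × Bool)
    (b : Fin s → ℕ × Bool) (y : ℕ × Bool) :
    connSumFin (Fin.snoc a (1, true)) (Fin.snoc b y) z =
      connSumFin a (Fin.snoc b (y.1 + 1, y.2)) z := by
  rw [connSumFin, connSumFin, ENNReal.tsum_prod', ENNReal.tsum_prod',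
    ← (Fin.snocEquiv fun _ => ℕ).tsum_eq, ENNReal.tsum_prod', ENNReal.tsum_comm]
  refine tsum_congr fun q => ?_
  rw [ENNReal.tsum_comm]
  refine tsum_congr fun p => ?_
  obtain ⟨ν, hν⟩ : ∃ ν, chain p (s + 1) = ν + 1 := by
    rw [← Fin.snoc_init_self p, chain_snoc, if_pos s.lt_succ_self]
    exact ⟨_, rfl⟩
  have hw :=
    mul_nonneg (chainWeight_nonneg hz0 hz1 a q) (chainWeight_nonneg hz0 hz1 (Fin.snoc b y) p)
  have hsnoc : ∀ d, (Fin.snocEquiv fun _ => ℕ) (d, q) = Fin.snoc q d := fun _ => rfl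
  simp only [hsnoc, chainWeight_snoc, chain_snoc, if_pos r.lt_succ_self,
    chain_of_length_le q r.le_succ, termFactor_one_true, hν, chainWeight_snoc_succ]
  calc ∑' d : ℕ, ENNReal.ofReal (chainWeight a q z * ((1 - z ^ (d + 1)) / (chain q r + d + 1 : ℕ)) *
          chainWeight (Fin.snoc b y) p z * C (chain q r + (d + 1)) (ν + 1) z)
      = ∑' d : ℕ, ENNReal.ofReal (chainWeight a q z * chainWeight (Fin.snoc b y) p z) *
          ENNReal.ofReal ((1 - z ^ (d + 1)) / (chain q r + d + 1 : ℕ) *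
            C (chain q r + d + 1) (ν + 1) z) := by
        refine tsum_congr fun d => ?_
        rw [← ENNReal.ofReal_mul hw, ← add_assoc]
        congr 1
        ring
    _ = ENNReal.ofReal (chainWeight a q z * chainWeight (Fin.snoc b y) p z) *
          ENNReal.ofReal (C (chain q r) (ν + 1) z / (ν + 1)) := by
        rw [ENNReal.tsum_mul_left, tsum_ofReal_transport hz0 hz1]
    _ = _ := by
        rw [← ENNReal.ofReal_mul hw]
        congr 1
        push_cast
        ring

lemma ofFn_snoc_get {α : Type*} (K : List α) (x : α) : List.ofFn (Fin.snoc K.get x) = K ++ [x] := by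
  rw [List.ofFn_succ']
  simp only [Fin.snoc_castSucc, Fin.snoc_last, List.ofFn_get, List.concat_eq_append]

lemma incLast_append_singleton (L : AugIndex) (y : ℕ × Bool) :
    incLast (L ++ [y]) = L ++ [(y.1 + 1, y.2)] := by
  induction L with
  | nil => rfl
  | cons p t ih =>
    cases t with
    | nil => rfl
    | cons q ts => simp only [List.cons_append, incLast] at ih ⊢; rw [ih]

end Transport

theorem transport_y1_general (z : ℝ) (hz0 : 0 ≤ z) (hz1 : z < 1) (K L : AugIndex)
    (hLne : L ≠ []) :
    connSum (K ++ [(1, true)]) L z = connSum K (incLast L) z := by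
  obtain ⟨L, y, rfl⟩ : ∃ L' y, L = L' ++ [y] :=
    ⟨L.dropLast, L.getLast hLne, (List.dropLast_append_getLast hLne).symm⟩
  calc connSum (K ++ [(1, true)]) (L ++ [y]) z
      = connSumFin (Fin.snoc K.get (1, true)) (Fin.snoc L.get y) z := by
        rw [← ofFn_snoc_get, ← ofFn_snoc_get, connSum_ofFn]
    _ = connSumFin K.get (Fin.snoc L.get (y.1 + 1, y.2)) z := connSumFin_snoc_one_true hz0 hz1 _ _ _
    _ = connSum K (incLast (L ++ [y])) z := by
        rw [incLast_append_singleton, ← ofFn_snoc_get, ← connSum_ofFn, List.ofFn_get]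

/-- Transport relation: L̃i(w(k̃)y₁; w(l̃); z) = L̃i(w(k̃); w(l̃)x; z) for non-empty l̃,
i.e. appending the augmented entry (1,1) to the first index equals increasing the
last exponent of the second index by 1. -/
theorem transport_y1 (z : ℝ) (hz0 : 0 ≤ z) (hz1 : z < 1) (K L : AugIndex)
    (hK : K.Valid) (hL : L.Valid) (hLne : L ≠ []) :
    connSum (K ++ [(1, true)]) L z = connSum K (incLast L) z :=
  transport_y1_general z hz0 hz1 K L hLne
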